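/- Let A be a b×b matrix over ℚ and let B = A + I. Then in the formal power series ring ℚ[[h]]: Σ_{k≥2} Σ_{ν=1}^{k−1} (λ_{k,ν}/k) · h^k · Tr(A^ν B^{k−ν}) = −h·Tr(A) − Tr( Ln( I + (1 − e^h) A ) ), where Ln(I + H) = Σ_{m≥1} (−1)^{m−1} H^m / m, applied to the matrix H = (1−e^h)·A whose entries are power series in h with zero constant term. Note B − e^h A = I + (1−e^h)A. -/

import Mathlib

/-- The number of ascents of a permutation `σ` of `Fin m`, i.e. the number of
indices `i` with `i+1 < m` and `σ i < σ (i+1)`. -/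
def ascents {m : ℕ} (σ : Equiv.Perm (Fin m)) : ℕ :=
  (Finset.univ.filter fun i : Fin m =>
    ∃ h : (i : ℕ) + 1 < m, σ i < σ ⟨(i : ℕ) + 1, h⟩).card

/-- `lam k ν` is the proportion of permutations of `{1, …, k-1}` with exactly `ν - 1`
ascents: `λ_{k,ν} = (1/(k-1)!) · #{σ ∈ S_{k-1} : #ascents(σ) = ν-1}`. -/
noncomputable def lam (k ν : ℕ) : ℚ :=
  ((Finset.univ.filter fun σ : Equiv.Perm (Fin (k - 1)) => ascents σ = ν - 1).card : ℚ) /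
    ((k - 1).factorial : ℚ)

/-- The formal logarithm `Ln(M) = Σ_{m≥1} (−1)^{m−1}(M−I)^m/m` of a matrix `M` over `ℚ[[h]]`
whose entries have constant term given by the identity matrix: since the entries of
`(M−I)^m` vanish below degree `m`, the coefficient of `h^a` only involves `m ≤ a`. -/
noncomputable def matLn {N : Type*} [Fintype N] [DecidableEq N]
    (M : Matrix N N (PowerSeries ℚ)) : Matrix N N (PowerSeries ℚ) :=
  Matrix.of fun i j => PowerSeries.mk fun a =>
    ∑ m ∈ Finset.Icc 1 a, ((-1 : ℚ) ^ (m - 1) / (m : ℚ)) *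
      PowerSeries.coeff (R := ℚ) a (((M - 1) ^ m) i j)

/-!
Coefficientwise, both sides are linear combinations of the traces `Tr (A ^ m)`. On the right, the
coefficient of `h ^ k · Tr (A ^ m)` is `[h^k] (e^h - 1)^m / m = Δ^m[x ↦ x^k](0) / (m · k!)` (for
`k = 1` it cancels against `-h · Tr A`). On the left, expanding `A^ν (A + 1)^(k-ν)` binomially and
reading `λ_{k,ν}` as an average over `S_{k-1}` gives `Σ_σ C(k - 1 - asc σ, k - m) / k!`.

The two agree by Worpitzky's identity `x^(k-1) = Σ_{σ ∈ S_{k-1}} C(x + asc σ, k - 1)`: a word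
`f : [k-1] → [x]`, read along its stable sorting permutation `σ` and raised by the number of ascents
of `σ` passed so far, becomes a strictly increasing word in `[x + asc σ]`. Together with
`Δ^m[x ↦ x · g x](0) = m · Δ^(m-1)[g](1)` this gives `Δ^m[x^k](0) = m · Σ_σ C(asc σ + 1, k - m)`,
and reversing the values of `σ` exchanges `asc σ` with `k - 2 - asc σ`.
-/

open Finset

section Ascents

variable {n : ℕ}

lemma ascents_eq_card (σ : Equiv.Perm (Fin (n + 1))) :
    ascents σ = #{j : Fin n | σ j.castSucc < σ j.succ} := by
  rw [ascents, ← card_map Fin.castSuccEmb (s := {j : Fin n | σ j.castSucc < σ j.succ})]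
  refine congrArg card (ext fun i => ?_)
  simp only [mem_filter, mem_univ, true_and, mem_map, Fin.coe_castSuccEmb]
  constructor
  · rintro ⟨h, hi⟩
    exact ⟨⟨i, by omega⟩, hi, rfl⟩
  · rintro ⟨j, hj, rfl⟩
    exact ⟨by simp, hj⟩

lemma ascents_le (σ : Equiv.Perm (Fin (n + 1))) : ascents σ ≤ n :=
  ascents_eq_card σ ▸ (card_filter_le _ _).trans_eq (card_fin n)

lemma ascents_trans_revPerm (σ : Equiv.Perm (Fin (n + 1))) :
    ascents (σ.trans Fin.revPerm) = n - ascents σ := by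
  have hdesc (j : Fin n) : σ j.succ < σ j.castSucc ↔ ¬σ j.castSucc < σ j.succ :=
    ⟨lt_asymm, fun h => (not_lt.mp h).lt_of_ne (σ.injective.ne (Fin.castSucc_lt_succ).ne')⟩
  simp only [ascents_eq_card, Equiv.trans_apply, Fin.revPerm_apply, Fin.rev_lt_rev, hdesc,
    filter_not, card_sdiff_of_subset (filter_subset _ _), card_univ, Fintype.card_fin]

lemma sum_comp_ascents_reflect {M : Type*} [AddCommMonoid M] (g : ℕ → M) :
    ∑ σ : Equiv.Perm (Fin (n + 1)), g (ascents σ) =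
      ∑ σ : Equiv.Perm (Fin (n + 1)), g (n - ascents σ) := by
  rw [← Equiv.sum_comp (Equiv.mulLeft Fin.revPerm)]
  exact sum_congr rfl fun σ _ => congrArg g (ascents_trans_revPerm σ)

def ascentsBelow (σ : Equiv.Perm (Fin (n + 1))) (i : Fin (n + 1)) : ℕ :=
  #{j : Fin n | j.castSucc < i ∧ σ j.castSucc < σ j.succ}

variable (σ : Equiv.Perm (Fin (n + 1)))

lemma ascentsBelow_zero : ascentsBelow σ 0 = 0 := by
  simp [ascentsBelow]

lemma ascentsBelow_last : ascentsBelow σ (Fin.last n) = ascents σ := by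
  simp [ascentsBelow, ascents_eq_card, Fin.castSucc_lt_last]

lemma ascentsBelow_succ (k : Fin n) :
    ascentsBelow σ k.succ =
      ascentsBelow σ k.castSucc + if σ k.castSucc < σ k.succ then 1 else 0 := by
  have hsplit : univ.filter (fun j : Fin n => j.castSucc < k.succ ∧ σ j.castSucc < σ j.succ) =
      univ.filter (fun j : Fin n => j.castSucc < k.castSucc ∧ σ j.castSucc < σ j.succ) ∪
        univ.filter (fun j : Fin n => j = k ∧ σ j.castSucc < σ j.succ) := by
    ext j
    simp only [mem_filter, mem_univ, true_and, mem_union, Fin.lt_def, Fin.val_castSucc,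
      Fin.val_succ, ← Fin.val_inj]
    omega
  rw [ascentsBelow, ascentsBelow, hsplit, card_union_of_disjoint]
  · split_ifs with h <;> simp [filter_and, filter_eq', h]
  · rw [disjoint_filter]
    rintro j - ⟨hj, -⟩ ⟨rfl, -⟩
    exact lt_irrefl _ hj

lemma ascentsBelow_succ_le (k : Fin n) :
    ascentsBelow σ k.succ ≤ ascentsBelow σ k.castSucc + 1 := by
  rw [ascentsBelow_succ]; split_ifs <;> omega

lemma monotone_ascentsBelow : Monotone (ascentsBelow σ) :=
  Fin.monotone_iff_le_succ.mpr fun k => by rw [ascentsBelow_succ]; omega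

lemma ascentsBelow_le_ascents (i : Fin (n + 1)) : ascentsBelow σ i ≤ ascents σ :=
  ascentsBelow_last σ ▸ monotone_ascentsBelow σ (Fin.le_last i)

end Ascents

section Worpitzky

variable {n N : ℕ} (σ : Equiv.Perm (Fin (n + 1)))

def strictify (f : Fin (n + 1) → Fin N) (i : Fin (n + 1)) : ℕ :=
  f (σ i) + ascentsBelow σ i

lemma sort_eq_iff_strictMono_strictify (f : Fin (n + 1) → Fin N) :
    Tuple.sort f = σ ↔ StrictMono (strictify σ f) := by
  rw [eq_comm, Tuple.eq_sort_iff', Fin.strictMono_iff_lt_succ, Fin.strictMono_iff_lt_succ]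
  refine forall_congr' fun k => ?_
  change toLex (f (σ k.castSucc), σ k.castSucc) < toLex (f (σ k.succ), σ k.succ) ↔ _
  rw [Prod.Lex.toLex_lt_toLex, strictify, strictify, ascentsBelow_succ, Fin.lt_def, ← Fin.val_inj]
  by_cases h : σ k.castSucc < σ k.succ
  · simp only [h, and_true, if_true]
    omega
  · simp only [h, and_false, or_false, if_false]
    omega

lemma strictify_lt (f : Fin (n + 1) → Fin N) (i : Fin (n + 1)) :
    strictify σ f i < N + ascents σ := by
  have := ascentsBelow_le_ascents σ i
  have := (f (σ i)).isLt
  rw [strictify]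
  omega

lemma strictify_injective : Function.Injective (strictify (N := N) σ) := by
  intro f f' h
  funext j
  obtain ⟨i, rfl⟩ := σ.surjective j
  have := congrFun h i
  rw [strictify, strictify] at this
  exact Fin.val_injective (by omega)

lemma exists_strictify_eq {H : Fin (n + 1) → ℕ} (hH : StrictMono H)
    (hlast : H (Fin.last n) < N + ascents σ) :
    ∃ f : Fin (n + 1) → Fin N, strictify σ f = H := by
  have hle : ∀ i, ascentsBelow σ i ≤ H i := by
    intro i
    induction i using Fin.induction with
    | zero => simp [ascentsBelow_zero]
    | succ k ih =>
      have := hH (Fin.castSucc_lt_succ (i := k))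
      have := ascentsBelow_succ_le σ k
      omega
  have hmono : Monotone fun i => H i - ascentsBelow σ i := by
    refine Fin.monotone_iff_le_succ.mpr fun k => ?_
    have := hH (Fin.castSucc_lt_succ (i := k))
    have := ascentsBelow_succ_le σ k
    have := hle k.castSucc
    omega
  have hbound (i : Fin (n + 1)) : H i - ascentsBelow σ i < N := by
    have : H i - ascentsBelow σ i ≤ H (Fin.last n) - ascentsBelow σ (Fin.last n) :=
      hmono (Fin.le_last i)
    have := hle (Fin.last n)
    have := ascentsBelow_last σ
    omega
  refine ⟨fun j => ⟨H (σ.symm j) - ascentsBelow σ (σ.symm j), hbound _⟩,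
    funext fun i => ?_⟩
  have := hle i
  simp only [strictify, Equiv.symm_apply_apply]
  omega

lemma card_sort_eq :
    #{f : Fin (n + 1) → Fin N | Tuple.sort f = σ} = (N + ascents σ).choose (n + 1) := by
  rw [← card_range (N + ascents σ), ← card_powersetCard]
  simp_rw [sort_eq_iff_strictMono_strictify]
  refine card_bij (fun f _ => image (strictify σ f) univ) ?_ ?_ ?_
  · intro f hf
    refine mem_powersetCard.mpr ⟨fun x hx => ?_, ?_⟩
    · obtain ⟨i, -, rfl⟩ := mem_image.mp hx
      exact mem_range.mpr (strictify_lt σ f i)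
    · rw [card_image_of_injective _ (mem_filter.mp hf).2.injective, card_univ, Fintype.card_fin]
  · intro f hf f' hf' himage
    refine strictify_injective σ (((mem_filter.mp hf).2.range_inj (mem_filter.mp hf').2).mp ?_)
    rw [← Set.image_univ, ← Set.image_univ, ← coe_univ, ← coe_image, ← coe_image, himage]
  · intro s hs
    obtain ⟨hsub, hcard⟩ := mem_powersetCard.mp hs
    obtain ⟨f, hf⟩ := exists_strictify_eq σ (s.orderEmbOfFin hcard).strictMono
      (mem_range.mp (hsub (s.orderEmbOfFin_mem hcard _)))
    refine ⟨f, mem_filter.mpr ⟨mem_univ _, hf ▸ (s.orderEmbOfFin hcard).strictMono⟩, ?_⟩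
    rw [hf, ← coe_inj, coe_image, coe_univ, Set.image_univ, range_orderEmbOfFin]

theorem worpitzky (N : ℕ) :
    N ^ (n + 1) = ∑ σ : Equiv.Perm (Fin (n + 1)), (N + ascents σ).choose (n + 1) := by
  have hfibers := card_eq_sum_card_fiberwise (s := (univ : Finset (Fin (n + 1) → Fin N)))
    (f := Tuple.sort) (t := univ) fun _ _ => mem_univ _
  rw [card_univ, Fintype.card_fun, Fintype.card_fin, Fintype.card_fin] at hfibers
  rw [hfibers]
  exact sum_congr rfl fun σ _ => card_sort_eq σ

end Worpitzky

open fwdDiff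
open PowerSeries (C coeff exp)

lemma fwdDiff_iter_mul_apply_zero {R : Type*} [CommRing R] (g : ℕ → R) (m : ℕ) :
    (Δ_[1])^[m + 1] (fun x : ℕ => (x : R) * g x) 0 =
      (m + 1) * (Δ_[1])^[m] (fun x => g (x + 1)) 0 := by
  simp only [fwdDiff_iter_eq_sum_shift, zero_add, smul_eq_mul, mul_one, mul_sum]
  rw [sum_range_succ']
  simp only [Nat.cast_zero, zero_mul, smul_zero, add_zero, Nat.cast_add, Nat.cast_one]
  refine sum_congr rfl fun k _ => ?_
  have hchoose : ((m + 1).choose (k + 1) * (k + 1) : R) = (m + 1) * m.choose k := by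
    exact_mod_cast congrArg (Nat.cast : ℕ → R) (Nat.add_one_mul_choose_eq m k).symm
  simp only [Nat.add_sub_add_right, zsmul_eq_mul]
  push_cast
  linear_combination ((-1 : R) ^ (m - k) * g (k + 1)) * hchoose

lemma coeff_exp_sub_one_pow (k m : ℕ) :
    coeff k ((exp ℚ - 1) ^ m) =
      (((Δ_[1])^[m] (fun x : ℕ => (x : ℤ) ^ k) 0 : ℤ) : ℚ) / k.factorial := by
  rw [fwdDiff_iter_eq_sum_shift, sub_eq_add_neg, add_pow, map_sum]
  push_cast
  rw [sum_div]
  refine sum_congr rfl fun j _ => ?_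
  have hconst : (-1 : PowerSeries ℚ) ^ (m - j) * (m.choose j : PowerSeries ℚ) =
      C ((-1 : ℚ) ^ (m - j) * m.choose j) := by simp
  rw [mul_assoc, hconst, PowerSeries.coeff_mul_C, PowerSeries.exp_pow_eq_rescale_exp,
    PowerSeries.coeff_rescale, PowerSeries.coeff_exp]
  simp only [zero_add, smul_eq_mul, mul_one, Algebra.algebraMap_self, RingHom.id_apply,
    Int.cast_mul, Int.cast_pow, Int.cast_neg, Int.cast_one, Int.cast_natCast]
  ring

lemma fwdDiff_iter_pow_eq_sum_choose_ascents {n p : ℕ} (hp : p ≤ n + 1) :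
    (Δ_[1])^[p + 1] (fun x : ℕ => (x : ℤ) ^ (n + 2)) 0 =
      (p + 1) * ∑ σ : Equiv.Perm (Fin (n + 1)), ((ascents σ + 1).choose (n + 1 - p) : ℤ) := by
  have hworpitzky : (fun x : ℕ => (x : ℤ) ^ (n + 2)) = fun x : ℕ =>
      (x : ℤ) * ∑ σ : Equiv.Perm (Fin (n + 1)), ((x + ascents σ).choose (n + 1) : ℤ) := by
    funext x
    rw [pow_succ', ← Nat.cast_pow, worpitzky]
    push_cast
    rfl
  have hshift (a : ℕ) : (Δ_[1])^[p] (fun x : ℕ => ((x + 1 + a).choose (n + 1) : ℤ)) 0 =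
      (a + 1).choose (n + 1 - p) := by
    have := fwdDiff_iter_comp_add 1 (fun x : ℕ => (x.choose (p + (n + 1 - p)) : ℤ)) (a + 1) p 0
    rw [fwdDiff_iter_choose, Nat.add_sub_cancel' hp] at this
    simpa only [zero_add, add_assoc, add_comm a 1] using this
  rw [hworpitzky, fwdDiff_iter_mul_apply_zero, ← sum_fn, fwdDiff_iter_finsetSum, Finset.sum_apply]
  simp only [hshift]

lemma sum_choose_ascents_add_one_reflect {n : ℕ} (r : ℕ) :
    ∑ σ : Equiv.Perm (Fin (n + 1)), (ascents σ + 1).choose r =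
      ∑ σ : Equiv.Perm (Fin (n + 1)), (n + 1 - ascents σ).choose r := by
  rw [sum_comp_ascents_reflect fun a => (a + 1).choose r]
  exact sum_congr rfl fun σ _ => by rw [Nat.sub_add_comm (ascents_le σ)]

lemma coeff_exp_sub_one_pow_div_eq_sum_choose_ascents {n m : ℕ} (hm : m ∈ Icc 1 (n + 2)) :
    coeff (n + 2) ((exp ℚ - 1) ^ m) / (m : ℚ) =
      ((∑ σ : Equiv.Perm (Fin (n + 1)), (n + 1 - ascents σ).choose (n + 2 - m) : ℕ) : ℚ) /
        (n + 2).factorial := by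
  obtain ⟨p, rfl⟩ : ∃ p, m = p + 1 := ⟨m - 1, by grind⟩
  have hp : p ≤ n + 1 := by grind
  rw [coeff_exp_sub_one_pow, fwdDiff_iter_pow_eq_sum_choose_ascents hp,
    ← sum_choose_ascents_add_one_reflect, show n + 2 - (p + 1) = n + 1 - p by omega]
  push_cast
  field_simp

lemma pow_mul_add_one_pow_eq_sum {R : Type*} [Semiring R] (x : R) (ν p : ℕ) :
    x ^ ν * (x + 1) ^ p = ∑ m ∈ range (ν + p + 1), p.choose (ν + p - m) • x ^ m := by
  have hbinom :
      x ^ ν * (x + 1) ^ p = ∑ i ∈ range (p + 1), p.choose i • x ^ (ν + p - i) := by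
    rw [add_comm x, (Commute.one_left x).add_pow, mul_sum]
    refine sum_congr rfl fun i hi => ?_
    rw [one_pow, one_mul, ← mul_assoc, ← pow_add,
      ← Nat.add_sub_assoc (mem_range_succ_iff.mp hi), nsmul_eq_mul, (Nat.cast_commute _ _).eq]
  rw [hbinom, ← sum_range_reflect (fun m => p.choose (ν + p - m) • x ^ m),
    ← sum_subset (range_mono (by omega : p + 1 ≤ ν + p + 1))]
  · refine sum_congr rfl fun j hj => ?_
    rw [show ν + p + 1 - 1 - j = ν + p - j by omega,
      Nat.sub_sub_self (by grind)]
  · intro i _ hi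
    rw [show ν + p + 1 - 1 - i = ν + p - i by omega,
      Nat.sub_sub_self (by grind), Nat.choose_eq_zero_of_lt (by simpa using hi), zero_smul]

lemma sum_lam_mul (n : ℕ) (F : ℕ → ℚ) :
    ∑ ν ∈ Icc 1 (n + 1), lam (n + 2) ν * F ν =
      (∑ σ : Equiv.Perm (Fin (n + 1)), F (ascents σ + 1)) / (n + 1).factorial := by
  rw [← sum_fiberwise_of_maps_to (g := fun σ => ascents σ + 1) (t := Icc 1 (n + 1))
    (fun σ _ => mem_Icc.mpr ⟨by omega, by have := ascents_le σ; omega⟩), sum_div]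
  refine sum_congr rfl fun ν hν => ?_
  have hfiber : univ.filter (fun σ : Equiv.Perm (Fin (n + 1)) => ascents σ + 1 = ν) =
      univ.filter (fun σ => ascents σ = ν - 1) := filter_congr fun σ _ => by grind
  rw [sum_congr rfl fun σ hσ => by rw [(mem_filter.mp hσ).2], sum_const, nsmul_eq_mul, hfiber,
    lam, show n + 2 - 1 = n + 1 from rfl]
  ring

lemma coeff_trace_matLn_one_add_smul {N : Type*} [Fintype N] [DecidableEq N]
    (f : PowerSeries ℚ) (A : Matrix N N ℚ) (k : ℕ) :
    coeff k (matLn (1 + f • A.map C)).trace =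
      ∑ m ∈ Icc 1 k, (-1) ^ (m - 1) / m * coeff k (f ^ m) * (A ^ m).trace := by
  have hpow (m : ℕ) : (1 + f • A.map C - 1) ^ m = f ^ m • (A ^ m).map C := by
    rw [add_sub_cancel_left, smul_pow, ← RingHom.mapMatrix_apply, ← map_pow,
      RingHom.mapMatrix_apply]
  simp only [Matrix.trace, map_sum, Matrix.diag_apply, matLn, Matrix.of_apply, PowerSeries.coeff_mk,
    hpow, Matrix.smul_apply, Matrix.map_apply, smul_eq_mul, PowerSeries.coeff_mul_C]
  rw [sum_comm]
  simp only [mul_sum, mul_assoc]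

lemma sum_lam_mul_trace {N : Type*} [Fintype N] [DecidableEq N] (n : ℕ) (A : Matrix N N ℚ) :
    ∑ ν ∈ Icc 1 (n + 1),
        lam (n + 2) ν / (n + 2 : ℕ) * (A ^ ν * (A + 1) ^ (n + 2 - ν)).trace =
      ∑ m ∈ Icc 1 (n + 2),
        coeff (n + 2) ((exp ℚ - 1) ^ m) / m * (A ^ m).trace := by
  have htrace (a : ℕ) (ha : a ≤ n) : (A ^ (a + 1) * (A + 1) ^ (n + 2 - (a + 1))).trace =
      ∑ m ∈ range (n + 3), ((n + 1 - a).choose (n + 2 - m) : ℚ) * (A ^ m).trace := by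
    rw [pow_mul_add_one_pow_eq_sum, Matrix.trace_sum,
      show a + 1 + (n + 2 - (a + 1)) = n + 2 by omega, show n + 2 - (a + 1) = n + 1 - a by omega]
    exact sum_congr rfl fun m _ => by rw [Matrix.trace_smul, nsmul_eq_mul]
  set c : ℕ → ℚ := fun m =>
    ((∑ σ : Equiv.Perm (Fin (n + 1)), (n + 1 - ascents σ).choose (n + 2 - m) : ℕ) : ℚ) /
      (n + 2).factorial
  calc _ = (∑ σ : Equiv.Perm (Fin (n + 1)),
          (A ^ (ascents σ + 1) * (A + 1) ^ (n + 2 - (ascents σ + 1))).trace / (n + 2 : ℕ)) /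
            (n + 1).factorial := by
        rw [← sum_lam_mul n fun ν => (A ^ ν * (A + 1) ^ (n + 2 - ν)).trace / (n + 2 : ℕ)]
        exact sum_congr rfl fun ν _ => by ring
    _ = ∑ m ∈ range (n + 3), c m * (A ^ m).trace := by
        rw [sum_congr rfl fun σ _ => by rw [htrace _ (ascents_le σ)]]
        simp only [c, sum_div, Nat.cast_sum, sum_mul]
        rw [sum_comm]
        refine sum_congr rfl fun m _ => sum_congr rfl fun σ _ => ?_
        rw [Nat.factorial_succ (n + 1)]
        push_cast
        field_simp
        ring
    _ = ∑ m ∈ Icc 1 (n + 2), c m * (A ^ m).trace := by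
        have hc0 : c 0 = 0 := by
          simp only [c, Nat.sub_zero]
          rw [sum_eq_zero fun σ _ => Nat.choose_eq_zero_of_lt (by omega), Nat.cast_zero, zero_div]
        rw [range_eq_Ico, sum_eq_sum_Ico_succ_bot (by omega), hc0, zero_mul, zero_add]
        rfl
    _ = _ := sum_congr rfl fun m hm => by rw [coeff_exp_sub_one_pow_div_eq_sum_choose_ascents hm]

lemma coeff_trace_matLn_one_sub_exp_smul {N : Type*} [Fintype N] [DecidableEq N]
    (A : Matrix N N ℚ) (k : ℕ) :
    coeff k (matLn (1 + (1 - exp ℚ) • A.map C)).trace =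
      -∑ m ∈ Icc 1 k,
        coeff k ((exp ℚ - 1) ^ m) / m * (A ^ m).trace := by
  rw [coeff_trace_matLn_one_add_smul, ← sum_neg_distrib]
  refine sum_congr rfl fun m hm => ?_
  obtain ⟨p, rfl⟩ : ∃ p, m = p + 1 := ⟨m - 1, by grind⟩
  have hsign : (-1 : PowerSeries ℚ) ^ (p + 1) = C ((-1) ^ (p + 1)) := by simp
  have hsq : (-1 : ℚ) ^ p * (-1) ^ p = 1 := by rw [← mul_pow, neg_one_mul, neg_neg, one_pow]
  rw [← neg_sub, neg_pow (exp ℚ - 1), hsign, PowerSeries.coeff_C_mul,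
    Nat.add_sub_cancel, pow_succ (-1 : ℚ) p]
  linear_combination (-(coeff k ((exp ℚ - 1) ^ (p + 1)) / (p + 1 : ℕ) *
    (A ^ (p + 1)).trace)) * hsq

/-- For a `b×b` matrix `A` over `ℚ` and `B = A + I`, in `ℚ[[h]]`:
`Σ_{k≥2} Σ_{ν=1}^{k−1} (λ_{k,ν}/k)·h^k·Tr(A^ν B^{k−ν})
  = −h·Tr(A) − Tr(Ln(I + (1−e^h)·A))`. -/
theorem trace_series_eq_trace_matLn (b : ℕ) (A : Matrix (Fin b) (Fin b) ℚ) :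
    (PowerSeries.mk fun k =>
        if 2 ≤ k then
          ∑ ν ∈ Finset.Icc 1 (k - 1),
            lam k ν / (k : ℚ) * Matrix.trace (A ^ ν * (A + 1) ^ (k - ν))
        else 0) =
      -(PowerSeries.C (R := ℚ) (Matrix.trace A)) * PowerSeries.X -
        Matrix.trace (matLn (1 + (1 - PowerSeries.exp ℚ) • A.map (PowerSeries.C (R := ℚ)))) := by
  ext k
  rw [PowerSeries.coeff_mk, map_sub, coeff_trace_matLn_one_sub_exp_smul, neg_mul, map_neg,
    PowerSeries.coeff_C_mul, PowerSeries.coeff_X]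
  rcases k with _ | _ | n
  · simp
  · simp [PowerSeries.coeff_exp]
  · rw [if_pos (by omega)]
    refine (sum_lam_mul_trace n A).trans ?_
    simp
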